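/- Let n ≥ 1 and let 𝓑ₙ denote the set of n×n unitary matrices A that possess a biunimodular vector. Then 𝓑ₙ = U(n) if and only if 𝓑ₙ is closed under matrix multiplication, i.e. A·B ∈ 𝓑ₙ whenever A, B ∈ 𝓑ₙ. -/

import Mathlib

/-!
Every `A ∈ U(n)` factors as `(A C) C⁻¹` with both factors in `𝓑ₙ`, so closure under products
forces `𝓑ₙ = U(n)`. Let `x = A⋆𝟙`, so that `A x = 𝟙` and `‖x‖² = n`, let `z` be the phase vector
`z_k = e^{i arg x_k}` and `t = ∑ |x_k| ≤ n`. Since `α ↦ |∑_k e^{iαk}|` runs from `n` down to `0`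
on `[0, 2π/n]`, some unimodular `y` has `∑ y_k = t`. The pairs `(𝟙, y)` and `(x, z)` then have
the same Gram matrix `[[n, t], [t, n]]`, so a unitary `C` maps `𝟙 ↦ x` and `y ↦ z`: the vector
`𝟙` is biunimodular for `A C` and `z` is biunimodular for `C⁻¹`.
-/

/-- The set of unitary `n×n` matrices possessing a biunimodular vector, as a subset
of the unitary group `U(n)`. -/
def biuniSet (n : ℕ) : Set (Matrix.unitaryGroup (Fin n) ℂ) :=
  {A | ∃ v : Fin n → ℂ, (∀ k, ‖v k‖ = 1) ∧
    ∀ k, ‖(A : Matrix (Fin n) (Fin n) ℂ).mulVec v k‖ = 1}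

open scoped InnerProductSpace
open Complex Matrix Real ComplexConjugate

theorem exists_linearIsometryEquiv_apply_eq_of_inner_eq {𝕜 E ι : Type*} [RCLike 𝕜]
    [NormedAddCommGroup E] [InnerProductSpace 𝕜 E] [FiniteDimensional 𝕜 E] [Fintype ι]
    {v w : ι → E} (h : ∀ i j, ⟪v i, v j⟫_𝕜 = ⟪w i, w j⟫_𝕜) :
    ∃ L : E ≃ₗᵢ[𝕜] E, ∀ i, L (v i) = w i := by
  classical
  -- Equal Gram matrices make `∑ cᵢ vᵢ ↦ ∑ cᵢ wᵢ` a well-defined isometry on the span of `v`,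
  -- which then extends to all of `E`.
  set f := Fintype.linearCombination 𝕜 v
  set g := Fintype.linearCombination 𝕜 w
  have hinner : ∀ c d, ⟪g c, g d⟫_𝕜 = ⟪f c, f d⟫_𝕜 := fun c d => by
    simp only [f, g, Fintype.linearCombination_apply, sum_inner, inner_sum, inner_smul_left,
      inner_smul_right, h]
  have hnorm : ∀ c, ‖g c‖ = ‖f c‖ := fun c => by
    rw [norm_eq_sqrt_re_inner (𝕜 := 𝕜), norm_eq_sqrt_re_inner (𝕜 := 𝕜), hinner]
  have hker : LinearMap.ker f ≤ LinearMap.ker g := fun c hc => by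
    rw [LinearMap.mem_ker, ← norm_eq_zero, hnorm, norm_eq_zero]
    exact hc
  let T : LinearMap.range f →ₗ[𝕜] E :=
    (LinearMap.ker f).liftQ g hker ∘ₗ f.quotKerEquivRange.symm
  have hT : ∀ c, T ⟨f c, LinearMap.mem_range_self f c⟩ = g c := fun c => by
    simp [T]
  let T' : LinearMap.range f →ₗᵢ[𝕜] E :=
    { T with
      norm_map' := by
        rintro ⟨_, c, rfl⟩
        exact (congrArg norm (hT c)).trans (hnorm c) }
  refine ⟨T'.extend.toLinearIsometryEquiv rfl, fun i => ?_⟩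
  have hfi : f (Pi.single i 1) = v i := by simp [f]
  have hgi : g (Pi.single i 1) = w i := by simp [g]
  calc T'.extend.toLinearIsometryEquiv rfl (v i)
      = T'.extend (⟨f (Pi.single i 1), LinearMap.mem_range_self f _⟩ : LinearMap.range f) := by
        rw [LinearIsometry.toLinearIsometryEquiv_apply, ← hfi]
    _ = w i := by rw [LinearIsometry.extend_apply]; exact (hT _).trans hgi

theorem exists_mem_unitaryGroup_mulVec_eq {𝕜 m ι : Type*} [RCLike 𝕜] [Fintype m] [DecidableEq m]
    [Fintype ι] {a b : ι → m → 𝕜} (h : ∀ i j, star (a i) ⬝ᵥ a j = star (b i) ⬝ᵥ b j) :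
    ∃ M ∈ unitaryGroup m 𝕜, ∀ i, M *ᵥ a i = b i := by
  obtain ⟨L, hL⟩ := exists_linearIsometryEquiv_apply_eq_of_inner_eq (𝕜 := 𝕜)
    (v := fun i => WithLp.toLp 2 (a i)) (w := fun i => WithLp.toLp 2 (b i))
    (fun i j => by simpa only [EuclideanSpace.inner_toLp_toLp, dotProduct_comm] using h i j)
  refine ⟨toEuclideanLin.symm L.toLinearMap, ?_, fun i => ?_⟩
  · rw [toEuclideanLin_eq_toLin_orthonormal]
    exact L.toMatrix_mem_unitaryGroup _ _
  · apply WithLp.toLp_injective 2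
    have := congr($(toEuclideanLin.apply_symm_apply L.toLinearMap) (WithLp.toLp 2 (a i)))
    rw [toLpLin_apply] at this
    exact this.trans (hL i)

section DotProduct

variable {𝕜 m : Type*} [RCLike 𝕜] [Fintype m]

theorem star_dotProduct_self_eq_sum_norm_sq (v : m → 𝕜) :
    star v ⬝ᵥ v = ((∑ k, ‖v k‖ ^ 2 : ℝ) : 𝕜) := by
  simp [dotProduct, RCLike.conj_mul]

theorem star_dotProduct_self_of_norm_eq_one {v : m → 𝕜} (hv : ∀ k, ‖v k‖ = 1) :
    star v ⬝ᵥ v = Fintype.card m := by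
  simp [star_dotProduct_self_eq_sum_norm_sq, hv]

theorem sum_norm_sq_mulVec_of_mem_unitaryGroup [DecidableEq m] {M : Matrix m m 𝕜}
    (hM : M ∈ unitaryGroup m 𝕜) (v : m → 𝕜) : ∑ k, ‖(M *ᵥ v) k‖ ^ 2 = ∑ k, ‖v k‖ ^ 2 := by
  have h : star (M *ᵥ v) ⬝ᵥ (M *ᵥ v) = star v ⬝ᵥ v := by
    rw [star_mulVec, dotProduct_mulVec, vecMul_vecMul, ← star_eq_conjTranspose,
      mem_unitaryGroup_iff'.mp hM, vecMul_one]
  rwa [star_dotProduct_self_eq_sum_norm_sq, star_dotProduct_self_eq_sum_norm_sq,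
    RCLike.ofReal_inj] at h

end DotProduct

theorem sum_le_card_of_sum_sq_eq_card {ι : Type*} [Fintype ι] {f : ι → ℝ}
    (h : ∑ i, f i ^ 2 = Fintype.card ι) : ∑ i, f i ≤ Fintype.card ι := by
  have := Finset.sum_le_sum fun i (_ : i ∈ Finset.univ) => two_mul_le_add_sq (f i) 1
  simp [Finset.sum_add_distrib, ← Finset.mul_sum, h] at this
  linarith

theorem conj_mul_exp_arg_mul_I (z : ℂ) : conj z * exp (arg z * I) = ‖z‖ := by
  nth_rewrite 1 [← norm_mul_exp_arg_mul_I z]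
  rw [map_mul, mul_assoc, conj_mul', norm_exp_ofReal_mul_I]
  simp

theorem exists_norm_eq_one_sum_eq {n : ℕ} (hn : 2 ≤ n) {t : ℝ} (ht₀ : 0 ≤ t) (htn : t ≤ n) :
    ∃ y : Fin n → ℂ, (∀ k, ‖y k‖ = 1) ∧ ∑ k, y k = t := by
  let S : ℝ → ℂ := fun α => ∑ k : Fin n, exp (α * I) ^ (k : ℕ)
  have hS : Continuous fun α => ‖S α‖ := by fun_prop
  have hS₀ : ‖S 0‖ = n := by simp [S]
  have hS₁ : ‖S (2 * π / n)‖ = 0 := by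
    have hζ := isPrimitiveRoot_exp n (by omega)
    simp only [S, norm_eq_zero]
    rw [Fin.sum_univ_eq_sum_range (fun k => exp (↑(2 * π / n) * I) ^ k)]
    convert hζ.geom_sum_eq_zero (by omega) using 4
    push_cast
    ring
  obtain ⟨α, -, hα⟩ : ∃ α ∈ Set.Icc 0 (2 * π / n), ‖S α‖ = t :=
    intermediate_value_Icc' (by positivity) hS.continuousOn (by rw [hS₀, hS₁]; exact ⟨ht₀, htn⟩)
  refine ⟨fun k => conj (exp (α * I) ^ (k : ℕ)) * exp (arg (S α) * I), fun k => ?_, ?_⟩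
  · simp [norm_exp_ofReal_mul_I]
  · rw [← Finset.sum_mul, ← map_sum, conj_mul_exp_arg_mul_I, hα]

theorem exists_mem_unitaryGroup_one_mulVec_eq {n : ℕ} (hn : 2 ≤ n) {x : Fin n → ℂ}
    (hx : ∑ k, ‖x k‖ ^ 2 = n) :
    ∃ C ∈ unitaryGroup (Fin n) ℂ, C *ᵥ 1 = x ∧
      ∃ y : Fin n → ℂ, (∀ k, ‖y k‖ = 1) ∧ C *ᵥ y = fun k => exp (arg (x k) * I) := by
  set z : Fin n → ℂ := fun k => exp (arg (x k) * I)
  set t := ∑ k, ‖x k‖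
  obtain ⟨y, hy, hyt⟩ := exists_norm_eq_one_sum_eq hn (t := t) (by positivity)
    (by simpa using sum_le_card_of_sum_sq_eq_card (f := fun k => ‖x k‖) (by simpa using hx))
  have hxx : star x ⬝ᵥ x = n := by
    rw [star_dotProduct_self_eq_sum_norm_sq, hx]
    simp
  have hxz : star x ⬝ᵥ z = t := by
    simp [z, t, dotProduct, conj_mul_exp_arg_mul_I]
  have h1y : 1 ⬝ᵥ y = t := by rw [one_dotProduct, hyt]
  obtain ⟨C, hC, h⟩ := exists_mem_unitaryGroup_mulVec_eq (a := ![1, y]) (b := ![x, z]) (by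
    intro i j
    fin_cases i <;> fin_cases j <;> simp only [Fin.zero_eta, Fin.mk_one, cons_val_zero,
      cons_val_one, star_one]
    · simp [hxx]
    · rw [h1y, hxz]
    · rw [star_dotProduct, star_dotProduct z, star_one, h1y, hxz]
    · rw [star_dotProduct_self_of_norm_eq_one hy,
        star_dotProduct_self_of_norm_eq_one fun k => norm_exp_ofReal_mul_I _])
  exact ⟨C, hC, h 0, y, hy, h 1⟩

theorem mem_biuniSet_of_le_one {n : ℕ} (hn : n ≤ 1) (A : unitaryGroup (Fin n) ℂ) :
    A ∈ biuniSet n := by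
  refine ⟨1, fun _ => by simp, fun k => ?_⟩
  have : Subsingleton (Fin n) := Fin.subsingleton_iff_le_one.mpr hn
  have h := sum_norm_sq_mulVec_of_mem_unitaryGroup A.2 1
  rwa [Fintype.sum_subsingleton _ k, Fintype.sum_subsingleton _ k, Pi.one_apply, norm_one,
    one_pow, pow_eq_one_iff_of_nonneg (norm_nonneg _) two_ne_zero] at h

theorem exists_mul_mem_biuniSet_and_inv_mem {n : ℕ} (hn : 2 ≤ n) (A : unitaryGroup (Fin n) ℂ) :
    ∃ C, A * C ∈ biuniSet n ∧ C⁻¹ ∈ biuniSet n := by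
  set x := star (A : Matrix (Fin n) (Fin n) ℂ) *ᵥ 1
  have hAx : (A : Matrix (Fin n) (Fin n) ℂ) *ᵥ x = 1 := by
    rw [mulVec_mulVec, mem_unitaryGroup_iff.mp A.2, one_mulVec]
  have hx : ∑ k, ‖x k‖ ^ 2 = n := by
    rw [sum_norm_sq_mulVec_of_mem_unitaryGroup (Unitary.star_mem A.2)]
    simp
  obtain ⟨C, hC, hC₁, y, hy, hCy⟩ := exists_mem_unitaryGroup_one_mulVec_eq hn hx
  refine ⟨⟨C, hC⟩, ⟨1, fun _ => by simp, fun k => ?_⟩,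
    ⟨C *ᵥ y, fun k => by rw [hCy]; exact norm_exp_ofReal_mul_I _, fun k => ?_⟩⟩
  · rw [Submonoid.coe_mul, ← mulVec_mulVec, hC₁, hAx]
    simp
  · change ‖(star C *ᵥ (C *ᵥ y)) k‖ = 1
    rw [mulVec_mulVec, mem_unitaryGroup_iff'.mp hC, one_mulVec, hy]

theorem biuniSet_eq_univ_iff_mul_closed_general (n : ℕ) :
    biuniSet n = Set.univ ↔
      ∀ A ∈ biuniSet n, ∀ B ∈ biuniSet n, A * B ∈ biuniSet n := by
  refine ⟨fun h A _ B _ => h ▸ trivial, fun hmul => Set.eq_univ_of_forall fun A => ?_⟩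
  rcases le_or_gt n 1 with hn | hn
  · exact mem_biuniSet_of_le_one hn A
  · obtain ⟨C, hAC, hC⟩ := exists_mul_mem_biuniSet_and_inv_mem hn A
    simpa using hmul _ hAC _ hC

/-- `𝓑ₙ = U(n)` iff `𝓑ₙ` is closed under matrix multiplication. -/
theorem biuniSet_eq_univ_iff_mul_closed (n : ℕ) (hn : 1 ≤ n) :
    biuniSet n = Set.univ ↔
      ∀ A ∈ biuniSet n, ∀ B ∈ biuniSet n, A * B ∈ biuniSet n :=
  biuniSet_eq_univ_iff_mul_closed_general n
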